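/- (Sequence-level diffusion duality.) Fix integers K ≥ 2 and L ≥ 1, indices k : Fin L → Fin K, and ᾱ ∈ [0,1). Let μ be the product measure over ℓ : Fin L of the Gaussian measures N(ᾱ e_{k ℓ}, (1−ᾱ²) I_K) on ℝ^K, a probability measure on (Fin L → ℝ^K). Let A : ℝ^K → Fin K be the least-index argmax map, applied coordinatewise to give Â : (Fin L → ℝ^K) → (Fin L → Fin K). Then the pushforward Â_* μ is the product over ℓ : Fin L of the categorical distributions on Fin K assigning to i the mass 𝒯(ᾱ)·(if i = k ℓ then 1 else 0) + (1 − 𝒯(ᾱ))/K; i.e., the forward Uniform-state process factorizes over tokens and is the argmax pushforward of the factorized Gaussian process. -/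

import Mathlib

open MeasureTheory ProbabilityTheory

/-- The standard normal density `φ(z) = exp(-z²/2)/√(2π)`. -/
noncomputable def stdGaussianPDF (z : ℝ) : ℝ :=
  Real.exp (-z ^ 2 / 2) / Real.sqrt (2 * Real.pi)

/-- The standard normal cumulative distribution function `Φ(z) = ∫_{-∞}^z φ(u) du`. -/
noncomputable def stdGaussianCDF (z : ℝ) : ℝ :=
  ∫ u in Set.Iic z, stdGaussianPDF u

/-- The diffusion transformation operator
`𝒯(ᾱ) = (K/(K-1)) (∫_ℝ φ(z - ᾱ/√(1-ᾱ²)) Φ(z)^{K-1} dz - 1/K)`. -/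
noncomputable def diffTransform (K : ℕ) (α : ℝ) : ℝ :=
  ((K : ℝ) / ((K : ℝ) - 1)) *
    ((∫ z : ℝ, stdGaussianPDF (z - α / Real.sqrt (1 - α ^ 2))
        * stdGaussianCDF z ^ (K - 1)) - 1 / (K : ℝ))

/-- The least index attaining the maximum of `w : Fin K → ℝ`. -/
noncomputable def argmaxIdx {K : ℕ} [NeZero K] (w : Fin K → ℝ) : Fin K :=
  (Finset.univ.filter fun i => ∀ j, w j ≤ w i).min' (by
    obtain ⟨i, -, hi⟩ :=
      Finset.exists_max_image (Finset.univ : Finset (Fin K)) w Finset.univ_nonempty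
    exact ⟨i, Finset.mem_filter.mpr ⟨Finset.mem_univ i, fun j => hi j (Finset.mem_univ j)⟩⟩)

/-!
Tokens are independent and the preimage of a sequence under the coordinatewise argmax is a box,
so its mass is the product of the per-token argmax laws. Within a token the coordinates are
independent and atomless, hence a.s. pairwise distinct, and the argmax is the strict maximiser.
Conditioning on the signal coordinate `k` (law `N(ᾱ, σ²)`, `σ = √(1-ᾱ²)`) gives
`P(A = k) = ∫ φ(z - ᾱ/σ) Φ(z)^(K-1) dz`; the `K - 1` noise coordinates are exchangeable, so each
wins with probability `(1 - P(A = k)) / (K - 1)`, which is `𝒯(ᾱ)·[i = k] + (1 - 𝒯(ᾱ))/K`.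
-/

open scoped ENNReal

lemma stdGaussianPDF_eq_gaussianPDFReal : stdGaussianPDF = gaussianPDFReal 0 1 := by
  ext x
  simp [stdGaussianPDF, gaussianPDFReal, div_eq_inv_mul]

lemma stdGaussianCDF_eq_cdf : stdGaussianCDF = cdf (gaussianReal 0 1) := by
  ext x
  rw [cdf_eq_real, measureReal_def, gaussianReal_apply_eq_integral 0 one_ne_zero,
    ENNReal.toReal_ofReal (setIntegral_nonneg measurableSet_Iic fun _ _ =>
      gaussianPDFReal_nonneg 0 1 _), stdGaussianCDF, stdGaussianPDF_eq_gaussianPDFReal]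

lemma stdGaussianPDF_nonneg (x : ℝ) : 0 ≤ stdGaussianPDF x :=
  stdGaussianPDF_eq_gaussianPDFReal ▸ gaussianPDFReal_nonneg 0 1 x

lemma stdGaussianCDF_nonneg (x : ℝ) : 0 ≤ stdGaussianCDF x :=
  stdGaussianCDF_eq_cdf ▸ cdf_nonneg _ x

lemma stdGaussianCDF_le_one (x : ℝ) : stdGaussianCDF x ≤ 1 :=
  stdGaussianCDF_eq_cdf ▸ cdf_le_one _ x

lemma measurable_stdGaussianCDF : Measurable stdGaussianCDF :=
  (stdGaussianCDF_eq_cdf ▸ monotone_cdf (gaussianReal 0 1)).measurable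

lemma gaussianReal_Iio (x : ℝ) :
    gaussianReal 0 1 (Set.Iio x) = ENNReal.ofReal (stdGaussianCDF x) := by
  have := nullSingletonClass_gaussianReal (μ := 0) one_ne_zero
  rw [stdGaussianCDF_eq_cdf, ofReal_cdf, measure_congr Iio_ae_eq_Iic]

section Argmax

variable {K : ℕ} [NeZero K]

lemma argmaxIdx_eq_iff {w : Fin K → ℝ} {i : Fin K} :
    argmaxIdx w = i ↔ (∀ j, w j ≤ w i) ∧ ∀ j < i, w j < w i := by
  simp only [argmaxIdx, Finset.min'_eq_iff, Finset.mem_filter, Finset.mem_univ, true_and]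
  refine and_congr_right fun hi => ⟨fun h j hj => ?_, fun h j hj => ?_⟩
  · exact lt_of_le_of_ne (hi j) fun hji => (h j fun l => hji ▸ hi l).not_gt hj
  · exact not_lt.mp fun hji => (hj i).not_gt (h j hji)

lemma argmaxIdx_eq_iff_of_injective {w : Fin K → ℝ} (hw : Function.Injective w) {i : Fin K} :
    argmaxIdx w = i ↔ ∀ j ≠ i, w j < w i := by
  rw [argmaxIdx_eq_iff]
  refine ⟨fun h j hj => lt_of_le_of_ne (h.1 j) (hw.ne hj),
    fun h => ⟨fun j => ?_, fun j hj => h j hj.ne⟩⟩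
  rcases eq_or_ne j i with rfl | hj
  exacts [le_rfl, (h j hj).le]

lemma measurable_argmaxIdx : Measurable (argmaxIdx : (Fin K → ℝ) → Fin K) := by
  refine measurable_to_countable' fun i => ?_
  simp only [Set.preimage, Set.mem_singleton_iff, argmaxIdx_eq_iff]
  measurability

end Argmax

section PiMeasure

variable {n : ℕ}

lemma pi_setOf_succAbove_mem {α : Type*} [MeasurableSpace α] (μ : Fin (n + 1) → Measure α)
    [∀ i, SigmaFinite (μ i)] (k : Fin (n + 1)) {s : Set (α × (Fin n → α))}
    (hs : MeasurableSet s) :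
    Measure.pi μ {w | (w k, fun j => w (k.succAbove j)) ∈ s}
      = ∫⁻ x, Measure.pi (fun j => μ (k.succAbove j)) (Prod.mk x ⁻¹' s) ∂μ k := by
  rw [← Measure.prod_apply hs]
  exact (measurePreserving_piFinSuccAbove μ k).measure_preimage hs.nullMeasurableSet

variable (μ : Fin (n + 1) → Measure ℝ) [∀ i, SigmaFinite (μ i)]

lemma pi_setOf_apply_eq_apply [∀ i, NullSingletonClass (μ i)] {i k : Fin (n + 1)}
    (hik : i ≠ k) : Measure.pi μ {w | w i = w k} = 0 := by
  obtain ⟨i', rfl⟩ := Fin.exists_succAbove_eq hik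
  have hs : MeasurableSet {p : ℝ × (Fin n → ℝ) | p.2 i' = p.1} :=
    measurableSet_eq_fun (measurable_pi_apply i' |>.comp measurable_snd) measurable_fst
  refine (pi_setOf_succAbove_mem μ k hs).trans ?_
  simp only [Set.preimage_ofPred_eq, Measure.pi_hyperplane, lintegral_zero]

lemma ae_injective_pi [∀ i, NullSingletonClass (μ i)] :
    ∀ᵐ w ∂Measure.pi μ, Function.Injective w := by
  have : ∀ i k : Fin (n + 1), ∀ᵐ w ∂Measure.pi μ, w i = w k → i = k := fun i k => by
    rcases eq_or_ne i k with rfl | hik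
    · exact ae_of_all _ fun _ _ => rfl
    · exact (measure_eq_zero_iff_ae_notMem.mp (pi_setOf_apply_eq_apply μ hik)).mono
        fun w hw h => (hw h).elim
  filter_upwards [ae_all_iff.mpr fun i => ae_all_iff.mpr (this i)] with w hw i k using hw i k

lemma pi_setOf_forall_lt (k : Fin (n + 1)) :
    Measure.pi μ {w | ∀ j ≠ k, w j < w k}
      = ∫⁻ x, ∏ j, μ (k.succAbove j) (Set.Iio x) ∂μ k := by
  have hs : MeasurableSet {p : ℝ × (Fin n → ℝ) | ∀ j, p.2 j < p.1} := by measurability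
  calc Measure.pi μ {w | ∀ j ≠ k, w j < w k}
      = Measure.pi μ {w | (w k, fun j => w (k.succAbove j)) ∈ {p | ∀ j, p.2 j < p.1}} := by
        simp [Fin.forall_iff_succAbove k]
    _ = _ := pi_setOf_succAbove_mem μ k hs
    _ = _ := by
        congr with x
        rw [← Measure.pi_pi]
        congr with r
        simp

lemma pi_preimage_comp_perm (e : Equiv.Perm (Fin (n + 1))) (he : ∀ i, μ (e i) = μ i)
    {s : Set (Fin (n + 1) → ℝ)} (hs : MeasurableSet s) :
    Measure.pi μ ((· ∘ e) ⁻¹' s) = Measure.pi μ s := by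
  have hmp := measurePreserving_piCongrLeft (α := fun _ : Fin (n + 1) => ℝ) μ e.symm
  have : (fun j => μ (e.symm j)) = μ := funext fun j => by rw [← he, e.apply_symm_apply]
  rw [this] at hmp
  convert hmp.measure_preimage hs.nullMeasurableSet
  ext w
  simp [MeasurableEquiv.coe_piCongrLeft, Equiv.piCongrLeft_apply]

end PiMeasure

section ArgmaxLaw

variable {n : ℕ} {μ : Fin (n + 1) → Measure ℝ} [∀ i, IsProbabilityMeasure (μ i)]

lemma sum_pi_argmaxIdx_eq_one : ∑ i, Measure.pi μ {w | argmaxIdx w = i} = 1 := by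
  rw [← measure_univ (μ := Measure.pi μ), ← Set.preimage_univ (f := argmaxIdx),
    ← Finset.coe_univ, ← sum_measure_preimage_singleton _ fun i _ =>
      measurable_argmaxIdx (measurableSet_singleton i)]
  rfl

variable [∀ i, NullSingletonClass (μ i)]

lemma pi_argmaxIdx_eq_pi_forall_lt (i : Fin (n + 1)) :
    Measure.pi μ {w | argmaxIdx w = i} = Measure.pi μ {w | ∀ j ≠ i, w j < w i} :=
  measure_congr <| (ae_injective_pi μ).mono fun _ hw =>
    propext (argmaxIdx_eq_iff_of_injective hw)

lemma pi_argmaxIdx_eq_of_ne_of_ne {ν : Measure ℝ} {k : Fin (n + 1)} (hμ : ∀ j ≠ k, μ j = ν)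
    {i i' : Fin (n + 1)} (hi : i ≠ k) (hi' : i' ≠ k) :
    Measure.pi μ {w | argmaxIdx w = i} = Measure.pi μ {w | argmaxIdx w = i'} := by
  have hk : Equiv.swap i i' k = k := Equiv.swap_apply_of_ne_of_ne hi.symm hi'.symm
  have he : ∀ j, μ (Equiv.swap i i' j) = μ j := fun j => by
    rcases eq_or_ne j k with rfl | hj
    · rw [hk]
    · rw [hμ j hj, hμ _ (hk ▸ (Equiv.swap i i').injective.ne hj)]
  -- The least-index tie-break is not swap-invariant, but the a.e. equal strict-maximum events are.
  rw [pi_argmaxIdx_eq_pi_forall_lt, pi_argmaxIdx_eq_pi_forall_lt,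
    ← pi_preimage_comp_perm μ _ he (by measurability)]
  congr 1
  ext w
  simp only [Set.mem_preimage, Set.mem_ofPred_eq, Function.comp_apply, Equiv.swap_apply_left]
  exact (Equiv.swap i i').forall_congr fun {j} => by
    rw [Ne, Ne, Equiv.swap_apply_eq_iff, Equiv.swap_apply_right]

lemma pi_argmaxIdx_eq_ite {ν : Measure ℝ} {k : Fin (n + 1)} (hμ : ∀ j ≠ k, μ j = ν)
    (i : Fin (n + 1)) :
    Measure.pi μ {w | argmaxIdx w = i}
      = if i = k then ∫⁻ x, ν (Set.Iio x) ^ n ∂μ k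
        else (1 - ∫⁻ x, ν (Set.Iio x) ^ n ∂μ k) / n := by
  have hk : Measure.pi μ {w | argmaxIdx w = k} = ∫⁻ x, ν (Set.Iio x) ^ n ∂μ k := by
    simp only [pi_argmaxIdx_eq_pi_forall_lt, pi_setOf_forall_lt, hμ _ (Fin.succAbove_ne k _),
      Finset.prod_const, Finset.card_univ, Fintype.card_fin]
  split_ifs with hik
  · rw [hik, hk]
  have hn : (n : ℝ≥0∞) ≠ 0 :=
    Nat.cast_ne_zero.mpr (by rintro rfl; exact hik (Subsingleton.elim (α := Fin 1) i k))
  have hsum :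
      1 = Measure.pi μ {w | argmaxIdx w = k} + Measure.pi μ {w | argmaxIdx w = i} * n := by
    rw [← sum_pi_argmaxIdx_eq_one (μ := μ), ← Finset.add_sum_erase _ _ (Finset.mem_univ k),
      Finset.sum_congr rfl fun j hj =>
        pi_argmaxIdx_eq_of_ne_of_ne hμ (Finset.ne_of_mem_erase hj) hik]
    simp [Finset.card_erase_of_mem, mul_comm]
  rw [← hk, ENNReal.sub_eq_of_eq_add_rev (measure_ne_top _ _) hsum,
    ENNReal.mul_div_cancel_right hn (ENNReal.natCast_ne_top n)]

end ArgmaxLaw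

lemma lintegral_gaussianReal_Iio_pow {σ : ℝ} (hσ : 0 < σ) (β : ℝ) (n : ℕ) :
    ∫⁻ x, gaussianReal 0 (σ ^ 2).toNNReal (Set.Iio x) ^ n ∂gaussianReal (σ * β) (σ ^ 2).toNNReal
      = ENNReal.ofReal (∫ z, stdGaussianPDF (z - β) * stdGaussianCDF z ^ n) := by
  have hmap : ∀ m, (gaussianReal m 1).map (σ * ·) = gaussianReal (σ * m) (σ ^ 2).toNNReal :=
    fun m => by
      rw [gaussianReal_map_const_mul, mul_one, Real.toNNReal_of_nonneg (sq_nonneg σ)]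
  have hcdf : ∀ u, gaussianReal 0 (σ ^ 2).toNNReal (Set.Iio (σ * u))
      = ENNReal.ofReal (stdGaussianCDF u) := fun u => by
    rw [← mul_zero σ, ← hmap, Measure.map_apply (measurable_const_mul σ) measurableSet_Iio,
      ← gaussianReal_Iio]
    congr 1
    ext x
    simp [mul_lt_mul_iff_right₀ hσ]
  have hint : Integrable (fun u => stdGaussianCDF u ^ n) (gaussianReal β 1) :=
    Integrable.of_bound (measurable_stdGaussianCDF.pow_const n).aestronglyMeasurable 1
      (ae_of_all _ fun u => by
        rw [Real.norm_of_nonneg (pow_nonneg (stdGaussianCDF_nonneg u) n)]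
        exact pow_le_one₀ (stdGaussianCDF_nonneg u) (stdGaussianCDF_le_one u))
  calc ∫⁻ x, gaussianReal 0 (σ ^ 2).toNNReal (Set.Iio x) ^ n
          ∂gaussianReal (σ * β) (σ ^ 2).toNNReal
      = ∫⁻ u, ENNReal.ofReal (stdGaussianCDF u ^ n) ∂gaussianReal β 1 := by
        rw [← hmap, ← MeasurableEquiv.coe_mulLeft₀ hσ.ne', lintegral_map_equiv]
        simp only [MeasurableEquiv.coe_mulLeft₀, hcdf,
          ENNReal.ofReal_pow (stdGaussianCDF_nonneg _)]
    _ = ENNReal.ofReal (∫ u, stdGaussianCDF u ^ n ∂gaussianReal β 1) :=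
        (ofReal_integral_eq_lintegral_ofReal hint
          (ae_of_all _ fun u => pow_nonneg (stdGaussianCDF_nonneg u) n)).symm
    _ = ENNReal.ofReal (∫ z, stdGaussianPDF (z - β) * stdGaussianCDF z ^ n) := by
        rw [integral_gaussianReal_eq_integral_smul one_ne_zero]
        simp [stdGaussianPDF_eq_gaussianPDFReal, gaussianPDFReal_sub]

lemma pi_gaussianReal_argmaxIdx_eq {n : ℕ} (k i : Fin (n + 1)) {α : ℝ} (hα : α ^ 2 < 1) :
    Measure.pi (fun j => gaussianReal (if j = k then α else 0) (1 - α ^ 2).toNNReal)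
        {w | argmaxIdx w = i}
      = ENNReal.ofReal
          (if i = k then ∫ z, stdGaussianPDF (z - α / √(1 - α ^ 2)) * stdGaussianCDF z ^ n
            else (1 - ∫ z, stdGaussianPDF (z - α / √(1 - α ^ 2)) * stdGaussianCDF z ^ n) / n) := by
  set σ := √(1 - α ^ 2)
  have hσ : 0 < σ := Real.sqrt_pos.mpr (by linarith)
  have hσ2 : σ ^ 2 = 1 - α ^ 2 := Real.sq_sqrt (by linarith)
  have : ∀ j, NullSingletonClass (gaussianReal (if j = k then α else 0) (1 - α ^ 2).toNNReal) :=
    fun j => nullSingletonClass_gaussianReal (by simpa using hα)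
  have hwin := lintegral_gaussianReal_Iio_pow hσ (α / σ) n
  rw [hσ2, mul_div_cancel₀ _ hσ.ne'] at hwin
  rw [pi_argmaxIdx_eq_ite (ν := gaussianReal 0 (1 - α ^ 2).toNNReal)
    (fun j hj => by rw [if_neg hj]) i, if_pos rfl, hwin]
  split_ifs with hik
  · rfl
  have hn : (0 : ℝ) < n := Nat.cast_pos.mpr <| Nat.pos_of_ne_zero <| by
    rintro rfl; exact hik (Subsingleton.elim (α := Fin 1) i k)
  rw [ENNReal.ofReal_div_of_pos hn, ENNReal.ofReal_sub _ (integral_nonneg fun z =>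
    mul_nonneg (stdGaussianPDF_nonneg _) (pow_nonneg (stdGaussianCDF_nonneg z) n)),
    ENNReal.ofReal_one, ENNReal.ofReal_natCast]

lemma diffTransform_mul_ite_add {n : ℕ} (hn : n ≠ 0) (α : ℝ) (c : Prop) [Decidable c] :
    diffTransform (n + 1) α * (if c then 1 else 0) + (1 - diffTransform (n + 1) α) / (n + 1 : ℕ)
      = if c then ∫ z, stdGaussianPDF (z - α / √(1 - α ^ 2)) * stdGaussianCDF z ^ n
        else (1 - ∫ z, stdGaussianPDF (z - α / √(1 - α ^ 2)) * stdGaussianCDF z ^ n) / n := by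
  have hn' : (n : ℝ) ≠ 0 := Nat.cast_ne_zero.mpr hn
  simp only [diffTransform, Nat.add_sub_cancel, Nat.cast_add, Nat.cast_one, add_sub_cancel_right]
  split_ifs <;> field_simp <;> ring

theorem sequence_level_diffusion_duality_general (K L : ℕ) (hK : 2 ≤ K) [NeZero K]
    (k : Fin L → Fin K) (α : ℝ) (hα0 : 0 ≤ α) (hα1 : α < 1) (z : Fin L → Fin K) :
    (Measure.map (fun (W : Fin L → Fin K → ℝ) (ℓ : Fin L) => argmaxIdx (W ℓ))
        (Measure.pi fun ℓ : Fin L =>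
          Measure.pi fun i : Fin K =>
            gaussianReal (if i = k ℓ then α else 0) (Real.toNNReal (1 - α ^ 2)))) {z}
      = ∏ ℓ : Fin L,
          ENNReal.ofReal
            (diffTransform K α * (if z ℓ = k ℓ then 1 else 0)
              + (1 - diffTransform K α) / (K : ℝ)) := by
  obtain ⟨n, rfl⟩ : ∃ n, K = n + 1 := ⟨K - 1, by omega⟩
  have hmeas : Measurable fun (W : Fin L → Fin (n + 1) → ℝ) (ℓ : Fin L) => argmaxIdx (W ℓ) :=
    measurable_pi_lambda _ fun ℓ => measurable_argmaxIdx.comp (measurable_pi_apply ℓ)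
  have hbox : (fun (W : Fin L → Fin (n + 1) → ℝ) (ℓ : Fin L) => argmaxIdx (W ℓ)) ⁻¹' {z}
      = Set.univ.pi fun ℓ => {w | argmaxIdx w = z ℓ} := by
    ext W
    simp [funext_iff]
  rw [Measure.map_apply hmeas (measurableSet_singleton z), hbox, Measure.pi_pi]
  refine Finset.prod_congr rfl fun ℓ _ => ?_
  rw [pi_gaussianReal_argmaxIdx_eq (k ℓ) (z ℓ) (by nlinarith),
    diffTransform_mul_ite_add (by omega)]

/-- **Sequence-level diffusion duality.**  The coordinatewise argmax pushforward of the
factorized Gaussian process `⨂_ℓ N(ᾱ e_{k ℓ}, (1-ᾱ²) I_K)` is the product over tokens of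
the Uniform-state categorical marginals `Cat(𝒯(ᾱ) e_{k ℓ} + (1-𝒯(ᾱ)) 𝟙/K)`: its mass
at any sequence `z` is the product over `ℓ` of the token-level categorical masses. -/
theorem sequence_level_diffusion_duality (K L : ℕ) (hK : 2 ≤ K) [NeZero K] (hL : 1 ≤ L)
    (k : Fin L → Fin K) (α : ℝ) (hα0 : 0 ≤ α) (hα1 : α < 1) (z : Fin L → Fin K) :
    (Measure.map (fun (W : Fin L → Fin K → ℝ) (ℓ : Fin L) => argmaxIdx (W ℓ))
        (Measure.pi fun ℓ : Fin L =>
          Measure.pi fun i : Fin K =>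
            gaussianReal (if i = k ℓ then α else 0) (Real.toNNReal (1 - α ^ 2)))) {z}
      = ∏ ℓ : Fin L,
          ENNReal.ofReal
            (diffTransform K α * (if z ℓ = k ℓ then 1 else 0)
              + (1 - diffTransform K α) / (K : ℝ)) :=
  sequence_level_diffusion_duality_general K L hK k α hα0 hα1 z
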